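/- arXiv:0907.4365 — 2 statements merged into one kernel-verified Lean document; each statement's English description precedes it below -/
import Mathlib

section
/- For any rational number c and any rational number b, the set of rational numbers x such that f_c^N(x) = b for some N ≥ 1 is finite, where f_c(x) = x^2 + c. -/
private lemma abs_grow (c x : ℚ) (h : |c| + 1 < |x|) : |x| < |x ^ 2 + c| := by
  have h1 : (0:ℚ) ≤ |c| := abs_nonneg c
  have h2 : |x ^ 2 + c| ≥ x ^ 2 - |c| := by
    have : x ^ 2 + c ≥ x ^ 2 - |c| := by
      have := neg_abs_le c; linarith
    calc |x ^ 2 + c| ≥ x ^ 2 + c := le_abs_self _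
      _ ≥ x ^ 2 - |c| := this
  have hx2 : x ^ 2 = |x| ^ 2 := (sq_abs x).symm
  nlinarith [abs_nonneg x]

private lemma den_grow (c x : ℚ) (h : c.den < x.den) : x.den < (x ^ 2 + c).den := by
  have key : (x ^ 2).den ∣ (x ^ 2 + c).den * c.den := by
    have := Rat.add_den_dvd (x ^ 2 + c) (-c)
    simpa using this
  have hle : (x ^ 2).den ≤ (x ^ 2 + c).den * c.den :=
    Nat.le_of_dvd (Nat.mul_pos (x ^ 2 + c).pos c.pos) key
  have hp : (x ^ 2).den = x.den ^ 2 := Rat.den_pow x 2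
  by_contra hcon
  push_neg at hcon
  have : x.den ^ 2 ≤ x.den * c.den := by
    calc x.den ^ 2 = (x ^ 2).den := hp.symm
      _ ≤ (x ^ 2 + c).den * c.den := hle
      _ ≤ x.den * c.den := Nat.mul_le_mul_right _ hcon
  nlinarith [x.pos, c.pos]

theorem iterated_preimages_finite (c b : ℚ) :
    {x : ℚ | ∃ N : ℕ, 1 ≤ N ∧ (fun y : ℚ => y ^ 2 + c)^[N] x = b}.Finite := by
  set f : ℚ → ℚ := fun y : ℚ => y ^ 2 + c with hf
  set M : ℚ := max (|b|) (|c| + 1) with hM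
  set D : ℕ := max c.den b.den with hD
  -- if |x| > M then all iterates have abs > M
  have absIter : ∀ N : ℕ, ∀ x : ℚ, M < |x| → M < |f^[N] x| := by
    intro N
    induction N with
    | zero => intro x hx; simpa using hx
    | succ n ih =>
      intro x hx
      rw [Function.iterate_succ_apply]
      apply ih
      have h1 : |c| + 1 < |x| := lt_of_le_of_lt (le_max_right _ _) hx
      have := abs_grow c x h1
      calc M < |x| := hx
        _ < |x ^ 2 + c| := this
  have denIter : ∀ N : ℕ, ∀ x : ℚ, D < x.den → D < (f^[N] x).den := by
    intro N
    induction N with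
    | zero => intro x hx; simpa using hx
    | succ n ih =>
      intro x hx
      rw [Function.iterate_succ_apply]
      apply ih
      have h1 : c.den < x.den := lt_of_le_of_lt (le_max_left _ _) hx
      have := den_grow c x h1
      show D < (x ^ 2 + c).den
      omega
  -- every element satisfies |x| ≤ M and den ≤ D
  have hsub : {x : ℚ | ∃ N : ℕ, 1 ≤ N ∧ f^[N] x = b} ⊆
      {x : ℚ | |x| ≤ M ∧ x.den ≤ D} := by
    rintro x ⟨N, -, hN⟩
    constructor
    · by_contra hcon
      push_neg at hcon
      have := absIter N x hcon
      rw [hN] at this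
      exact absurd (le_max_left (|b|) (|c| + 1)) (not_le.mpr this)
    · by_contra hcon
      push_neg at hcon
      have := denIter N x hcon
      rw [hN] at this
      have : b.den ≤ D := le_max_right _ _
      omega
  apply Set.Finite.subset _ hsub
  -- the bounded set is finite
  set K : ℤ := ⌈M * D⌉ with hK
  have : {x : ℚ | |x| ≤ M ∧ x.den ≤ D} ⊆
      (fun p : ℤ × ℤ => (p.1 : ℚ) / (p.2 : ℚ)) '' (Set.Icc (-K) K ×ˢ Set.Icc 1 (D : ℤ)) := by
    rintro x ⟨hxa, hxd⟩
    refine ⟨(x.num, (x.den : ℤ)), ⟨?_, ?_⟩, ?_⟩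
    · rw [Set.mem_Icc]
      have habs : |x.num| ≤ K := by
        have hden : ((x.den : ℚ)) ≠ 0 := by positivity
        have h0 : (x.num : ℚ) = x * x.den := (div_eq_iff hden).mp (Rat.num_div_den x)
        have h1 : (|x.num| : ℚ) = |x| * x.den := by
          rw [h0, abs_mul, abs_of_nonneg (by positivity : (0:ℚ) ≤ (x.den : ℚ))]
        have h2 : (|x.num| : ℚ) ≤ M * D := by
          rw [h1]
          have hM0 : (0:ℚ) ≤ M := le_trans (abs_nonneg b) (le_max_left _ _)
          exact mul_le_mul hxa (by exact_mod_cast hxd) (by positivity) hM0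
        have h3 : (|x.num| : ℚ) ≤ (K : ℚ) := h2.trans (Int.le_ceil _)
        exact_mod_cast h3
      constructor <;> [exact neg_le_of_abs_le habs; exact le_of_abs_le habs]
    · refine Set.mem_Icc.mpr ⟨?_, ?_⟩ <;> simp <;> [exact x.pos; exact_mod_cast hxd]
    · exact Rat.num_div_den x
  refine Set.Finite.subset (Set.Finite.image _ ?_) this
  exact (Set.finite_Icc _ _).prod (Set.finite_Icc _ _)
end

section
/- Assume there exist constants α₁, α₂ > 0 such that whenever b, c ∈ ℚ and f_c^N(x) = b has a rational solution x for some N ≥ 5, one has h(c) ≤ α₁·h(b) + α₂. Then there exist constants α₁', α₂' > 0 (depending only on α₁, α₂) such that: for all b, c ∈ ℚ, every rational x with f_c^N(x) = b for some N ≥ 5 satisfies h(x) ≤ α₁'·h(b) + α₂'. -/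
/-- The absolute logarithmic Weil height of a rational number `p/q` in lowest terms:
`h(p/q) = log max(|p|, |q|)`. -/
noncomputable def ratHeight (x : ℚ) : ℝ :=
  Real.log (max (|x.num| : ℝ) (x.den : ℝ))

lemma one_le_maxH (x : ℚ) : (1:ℝ) ≤ max (|x.num| : ℝ) (x.den : ℝ) :=
  le_max_of_le_right (by exact_mod_cast x.pos)

lemma ratHeight_nonneg (x : ℚ) : 0 ≤ ratHeight x :=
  Real.log_nonneg (one_le_maxH x)

lemma ratHeight_sq (x : ℚ) : ratHeight (x ^ 2) = 2 * ratHeight x := by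
  have h1 : (x ^ 2).num = x.num * x.num := by rw [sq]; exact Rat.mul_self_num x
  have h2 : (x ^ 2).den = x.den * x.den := by rw [sq]; exact Rat.mul_self_den x
  unfold ratHeight
  rw [h1, h2]
  have hmax : max (|(x.num * x.num : ℤ)| : ℝ) ((x.den * x.den : ℕ) : ℝ)
      = (max (|x.num| : ℝ) (x.den : ℝ)) ^ 2 := by
    push_cast [abs_mul]
    rcases le_total (|(x.num:ℝ)|) ((x.den:ℝ)) with h | h
    · rw [max_eq_right h, max_eq_right (mul_le_mul h h (abs_nonneg _) (by positivity)), sq]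
    · rw [max_eq_left h, max_eq_left (mul_le_mul h h (by positivity) (abs_nonneg _)), sq]
  rw [hmax, Real.log_pow]
  push_cast; ring

lemma ratHeight_add (q r : ℚ) :
    ratHeight (q + r) ≤ ratHeight q + ratHeight r + Real.log 2 := by
  have hqd : (q.den : ℤ) ≠ 0 := by exact_mod_cast q.den_nz
  have hrd : (r.den : ℤ) ≠ 0 := by exact_mod_cast r.den_nz
  have hB : ((q.den : ℤ) * (r.den : ℤ)) ≠ 0 := mul_ne_zero hqd hrd
  have heq := Rat.add_num_den q r
  set A : ℤ := q.num * r.den + q.den * r.num with hA_def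
  have hnum : (q + r).num ∣ A := by rw [heq]; exact Rat.num_dvd _ hB
  have hden : ((q + r).den : ℤ) ∣ ((q.den : ℤ) * (r.den : ℤ)) := by
    rw [heq]; exact Rat.den_dvd _ _
  set Mq : ℝ := max (|q.num| : ℝ) (q.den : ℝ) with hMq_def
  set Mr : ℝ := max (|r.num| : ℝ) (r.den : ℝ) with hMr_def
  have hMq1 : (1:ℝ) ≤ Mq := one_le_maxH q
  have hMr1 : (1:ℝ) ≤ Mr := one_le_maxH r
  have hAbound : (|A| : ℝ) ≤ 2 * (Mq * Mr) := by
    calc (|A| : ℝ)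
        ≤ (|(q.num * r.den : ℤ)| : ℝ) + (|(q.den * r.num : ℤ)| : ℝ) := by
          exact_mod_cast abs_add_le (q.num * (r.den:ℤ)) ((q.den:ℤ) * r.num)
      _ ≤ Mq * Mr + Mq * Mr := by
          push_cast [abs_mul]
          gcongr
          · exact le_max_left _ _
          · rw [abs_of_nonneg (by positivity : (0:ℝ) ≤ (r.den:ℝ))]
            exact le_max_right _ _
          · rw [abs_of_nonneg (by positivity : (0:ℝ) ≤ (q.den:ℝ))]
            exact le_max_right _ _
          · exact le_max_left _ _
      _ = 2 * (Mq * Mr) := by ring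
  have hnum' : (|(q + r).num| : ℝ) ≤ 2 * (Mq * Mr) := by
    by_cases hA0 : A = 0
    · have : q + r = 0 := by
        rw [heq, hA0]; simp
      rw [this]
      simp only [Rat.num_ofNat, abs_zero, Int.cast_zero]
      positivity
    · refine le_trans ?_ hAbound
      have h1 : |(q + r).num| ≤ |A| := by
        have : |(q + r).num| ∣ |A| := (abs_dvd _ _).2 ((dvd_abs _ _).2 hnum)
        exact Int.le_of_dvd (abs_pos.mpr hA0) this
      exact_mod_cast h1
  have hden' : ((q + r).den : ℝ) ≤ 2 * (Mq * Mr) := by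
    have h1 : ((q + r).den : ℤ) ≤ (q.den : ℤ) * (r.den : ℤ) :=
      Int.le_of_dvd (by exact_mod_cast Nat.mul_pos q.pos r.pos) hden
    have h2 : ((q.den : ℝ)) * (r.den : ℝ) ≤ Mq * Mr :=
      mul_le_mul (le_max_right _ _) (le_max_right _ _) (by positivity) (by linarith)
    have : ((q + r).den : ℝ) ≤ (q.den : ℝ) * (r.den : ℝ) := by exact_mod_cast h1
    nlinarith [mul_pos (lt_of_lt_of_le zero_lt_one hMq1) (lt_of_lt_of_le zero_lt_one hMr1)]
  have hmax : max (|(q + r).num| : ℝ) ((q + r).den : ℝ) ≤ 2 * (Mq * Mr) :=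
    max_le hnum' hden'
  have hpos : (0:ℝ) < max (|(q + r).num| : ℝ) ((q + r).den : ℝ) :=
    lt_of_lt_of_le zero_lt_one (one_le_maxH _)
  calc ratHeight (q + r) ≤ Real.log (2 * (Mq * Mr)) := Real.log_le_log hpos hmax
    _ = ratHeight q + ratHeight r + Real.log 2 := by
        rw [Real.log_mul (by norm_num) (by positivity), Real.log_mul (by positivity) (by positivity)]
        unfold ratHeight
        ring

lemma ratHeight_neg (x : ℚ) : ratHeight (-x) = ratHeight x := by
  unfold ratHeight
  rw [Rat.neg_num, Rat.neg_den]
  push_cast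
  rw [abs_neg]

lemma ratHeight_step (c y : ℚ) :
    2 * ratHeight y ≤ ratHeight (y ^ 2 + c) + ratHeight c + Real.log 2 := by
  have h : ratHeight (y ^ 2) = ratHeight ((y ^ 2 + c) + (-c)) := by ring_nf
  calc 2 * ratHeight y = ratHeight (y ^ 2) := (ratHeight_sq y).symm
    _ = ratHeight ((y ^ 2 + c) + (-c)) := h
    _ ≤ ratHeight (y ^ 2 + c) + ratHeight (-c) + Real.log 2 := ratHeight_add _ _
    _ = ratHeight (y ^ 2 + c) + ratHeight c + Real.log 2 := by rw [ratHeight_neg]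

lemma ratHeight_iter (c : ℚ) (N : ℕ) (x : ℚ) :
    ratHeight x ≤ ratHeight ((fun y : ℚ => y ^ 2 + c)^[N] x)
      + (ratHeight c + Real.log 2) := by
  induction N generalizing x with
  | zero =>
    simp only [Function.iterate_zero, id_eq]
    have := ratHeight_nonneg c
    have : (0:ℝ) ≤ Real.log 2 := Real.log_nonneg (by norm_num)
    linarith [ratHeight_nonneg c]
  | succ n ih =>
    have hstep := ratHeight_step c x
    have hih := ih (x ^ 2 + c)
    rw [Function.iterate_succ_apply]
    have hnn : 0 ≤ ratHeight ((fun y : ℚ => y ^ 2 + c)^[n] ((fun y : ℚ => y ^ 2 + c) x)) :=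
      ratHeight_nonneg _
    have hK : (0:ℝ) ≤ ratHeight c + Real.log 2 := by
      have := ratHeight_nonneg c
      have : (0:ℝ) ≤ Real.log 2 := Real.log_nonneg (by norm_num)
      linarith [ratHeight_nonneg c]
    simp only [Function.iterate_succ_apply] at *
    linarith

theorem preimage_height_bound (α₁ α₂ : ℝ) (hα₁ : 0 < α₁) (hα₂ : 0 < α₂)
    (H : ∀ (b c x : ℚ) (N : ℕ), 5 ≤ N → (fun y : ℚ => y ^ 2 + c)^[N] x = b →
      ratHeight c ≤ α₁ * ratHeight b + α₂) :
    ∃ α₁' α₂' : ℝ, 0 < α₁' ∧ 0 < α₂' ∧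
      ∀ (b c x : ℚ) (N : ℕ), 5 ≤ N → (fun y : ℚ => y ^ 2 + c)^[N] x = b →
        ratHeight x ≤ α₁' * ratHeight b + α₂' := by
  refine ⟨1 + α₁, α₂ + Real.log 2, by linarith, ?_, ?_⟩
  · have : (0:ℝ) < Real.log 2 := Real.log_pos (by norm_num)
    linarith
  · intro b c x N hN hiter
    have hc := H b c x N hN hiter
    have hx := ratHeight_iter c N x
    rw [hiter] at hx
    linarith
end
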